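/- Let R be a ring and s, t central elements of R. If the ring L_{(s,t)}(R) is a CN ring (with respect to its own center and its nilpotent elements), then R is a CN ring. -/

import Mathlib

/-- An element of a ring has a *CN-decomposition* if it is a sum of a central
element and a nilpotent element. -/
def HasCNDecomp {R : Type*} [Ring R] (a : R) : Prop :=
  ∃ c n : R, c ∈ Set.center R ∧ IsNilpotent n ∧ a = c + n

/-- A ring is a *CN ring* if every element has a CN-decomposition. -/
def IsCNRing (R : Type*) [Ring R] : Prop := ∀ a : R, HasCNDecomp a

/-- `L_{(s,t)}(R)`: the subring of `M₃(R)` of matrices of the form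
`[[a, 0, 0], [s*c, d, t*e], [0, 0, f]]`, for central elements `s, t` of `R`. -/
def Lst {R : Type*} [Ring R] (s t : R) (hs : s ∈ Set.center R) (ht : t ∈ Set.center R) :
    Subring (Matrix (Fin 3) (Fin 3) R) where
  carrier := {A | A 0 1 = 0 ∧ A 0 2 = 0 ∧ A 2 0 = 0 ∧ A 2 1 = 0 ∧
    (∃ c, A 1 0 = s * c) ∧ (∃ e, A 1 2 = t * e)}
  zero_mem' := ⟨rfl, rfl, rfl, rfl, ⟨0, by simp⟩, ⟨0, by simp⟩⟩
  one_mem' := by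
    refine ⟨?_, ?_, ?_, ?_, ⟨0, ?_⟩, ⟨0, ?_⟩⟩ <;> simp [Matrix.one_apply]
  add_mem' := by
    rintro A B ⟨hA1, hA2, hA3, hA4, ⟨c, hc⟩, ⟨e, he⟩⟩ ⟨hB1, hB2, hB3, hB4, ⟨c', hc'⟩, ⟨e', he'⟩⟩
    refine ⟨?_, ?_, ?_, ?_, ⟨c + c', ?_⟩, ⟨e + e', ?_⟩⟩ <;>
      simp [Matrix.add_apply, hA1, hA2, hA3, hA4, hB1, hB2, hB3, hB4, hc, hc', he, he', mul_add]
  neg_mem' := by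
    rintro A ⟨hA1, hA2, hA3, hA4, ⟨c, hc⟩, ⟨e, he⟩⟩
    refine ⟨?_, ?_, ?_, ?_, ⟨-c, ?_⟩, ⟨-e, ?_⟩⟩ <;>
      simp [Matrix.neg_apply, hA1, hA2, hA3, hA4, hc, he]
  mul_mem' := by
    rintro A B ⟨hA1, hA2, hA3, hA4, ⟨c, hc⟩, ⟨e, he⟩⟩ ⟨hB1, hB2, hB3, hB4, ⟨c', hc'⟩, ⟨e', he'⟩⟩
    refine ⟨?_, ?_, ?_, ?_, ⟨c * B 0 0 + A 1 1 * c', ?_⟩, ⟨A 1 1 * e' + e * B 2 2, ?_⟩⟩ <;>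
        rw [Matrix.mul_apply, Fin.sum_univ_three]
    · rw [hA1, hA2, hB1]; simp
    · rw [hA1, hA2, hB2]; simp
    · rw [hA3, hA4, hB3]; simp
    · rw [hA3, hA4, hB4]; simp
    · have h1 : A 1 1 * (s * c') = s * (A 1 1 * c') := by
        rw [← mul_assoc, ← hs.comm, mul_assoc]
      rw [hc, hc', hB3, mul_zero, add_zero, h1, mul_add, mul_assoc]
    · have h1 : A 1 1 * (t * e') = t * (A 1 1 * e') := by
        rw [← mul_assoc, ← ht.comm, mul_assoc]
      rw [he, he', hB2, mul_zero, zero_add, h1, mul_add, mul_assoc]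

theorem Set.map_mem_center_of_surjective {M N F : Type*} [Semigroup M] [Semigroup N]
    [FunLike F M N] [MulHomClass F M N] (f : F) (hf : Function.Surjective f) {c : M}
    (hc : c ∈ Set.center M) : f c ∈ Set.center N := by
  rw [Semigroup.mem_center_iff]
  intro y
  obtain ⟨x, rfl⟩ := hf y
  rw [← map_mul, ← map_mul, (Semigroup.mem_center_iff.mp hc) x]

theorem HasCNDecomp.map {R S : Type*} [Ring R] [Ring S] (f : R →+* S)
    (hf : Function.Surjective f) {a : R} (ha : HasCNDecomp a) : HasCNDecomp (f a) := by
  obtain ⟨c, n, hc, hn, rfl⟩ := ha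
  exact ⟨f c, f n, Set.map_mem_center_of_surjective f hf hc, hn.map f, map_add f c n⟩

theorem IsCNRing.of_surjective {R S : Type*} [Ring R] [Ring S] (f : R →+* S)
    (hf : Function.Surjective f) (h : IsCNRing R) : IsCNRing S := by
  intro b
  obtain ⟨a, rfl⟩ := hf b
  exact (h a).map f hf

namespace Lst

variable {R : Type*} [Ring R] {s t : R} {hs : s ∈ Set.center R} {ht : t ∈ Set.center R}

theorem diagonal_mem (d : Fin 3 → R) : Matrix.diagonal d ∈ Lst s t hs ht :=
  ⟨rfl, rfl, rfl, rfl, ⟨0, by simp⟩, ⟨0, by simp⟩⟩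

variable (s t hs ht) in
/-- Since the first row of a matrix in `L_{(s,t)}(R)` vanishes off the diagonal, reading off the
top left entry is multiplicative. -/
def cornerHom : Lst s t hs ht →+* R where
  toFun A := (A : Matrix (Fin 3) (Fin 3) R) 0 0
  map_one' := by simp
  map_mul' A B := by
    obtain ⟨hA01, hA02, -⟩ := A.2
    simp [Matrix.mul_apply, Fin.sum_univ_three, hA01, hA02]
  map_zero' := rfl
  map_add' _ _ := rfl

theorem cornerHom_surjective : Function.Surjective (cornerHom s t hs ht) :=
  fun r => ⟨⟨Matrix.diagonal fun _ => r, diagonal_mem _⟩, Matrix.diagonal_apply_eq _ 0⟩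

end Lst

/-- If `L_{(s,t)}(R)` is a CN ring, then `R` is a CN ring. -/
theorem isCNRing_of_Lst {R : Type*} [Ring R] (s t : R)
    (hs : s ∈ Set.center R) (ht : t ∈ Set.center R)
    (h : IsCNRing (Lst s t hs ht)) : IsCNRing R :=
  h.of_surjective _ Lst.cornerHom_surjective
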